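/- If 𝔚 is a bracket pattern category, then ⋃_{w∈𝔚} A(w) = { ‖w‖ : w ∈ 𝔚 }, i.e. the union of all completions of members of 𝔚 equals the set of frames (maxima) of members of 𝔚. -/
import Mathlib


/-- The frame of a bracket pattern: its maximum (sup). -/
def frame (w : Finset ℕ) : ℕ := w.sup id

/-- The dual of a bracket pattern: `w† = { ‖w‖ - i : i ∈ ℕ₀, i < ‖w‖, i ∉ w }`. -/
def dual (w : Finset ℕ) : Finset ℕ :=
  ((Finset.range (frame w)).filter (fun i => i ∉ w)).image (fun i => frame w - i)

/-- The completion of a bracket pattern: `A(w) = { j - i : j ∈ w, i ∈ ℕ₀, i ∉ w, i < j }`. -/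
def completion (w : Finset ℕ) : Finset ℕ :=
  w.biUnion (fun j => ((Finset.range j).filter (fun i => i ∉ w)).image (fun i => j - i))

/-- The `j`-projection of a bracket pattern: `∩_j w = { i ∈ w : i ≤ j }`. -/
def proj (j : ℕ) (w : Finset ℕ) : Finset ℕ := w.filter (fun i => i ≤ j)

/-- A bracket pattern is a nonempty finite subset of ℕ = {1,2,...}. -/
def IsBracketPattern (w : Finset ℕ) : Prop := w.Nonempty ∧ 0 ∉ w

/-- A bracket pattern category: a set of bracket patterns closed under
superposition (union), dualisation and projections. -/
def IsBPCategory (W : Set (Finset ℕ)) : Prop :=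
  (∀ w ∈ W, IsBracketPattern w) ∧
  (∀ w ∈ W, ∀ w' ∈ W, w ∪ w' ∈ W) ∧
  (∀ w ∈ W, dual w ∈ W) ∧
  (∀ w ∈ W, ∀ j ∈ w, proj j w ∈ W)

/-- The bracket pattern category generated by a set of bracket patterns. -/
def genBP (S : Set (Finset ℕ)) : Set (Finset ℕ) :=
  ⋂₀ {W | IsBPCategory W ∧ S ⊆ W}


lemma mem_completion {w : Finset ℕ} {x : ℕ} :
    x ∈ completion w ↔ ∃ j ∈ w, ∃ i, i < j ∧ i ∉ w ∧ j - i = x := by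
  simp [completion, Finset.mem_biUnion, Finset.mem_image, Finset.mem_filter,
    Finset.mem_range]
  tauto

lemma frame_proj {w : Finset ℕ} {j : ℕ} (hj : j ∈ w) : frame (proj j w) = j := by
  apply le_antisymm
  · exact Finset.sup_le fun i hi => (Finset.mem_filter.1 hi).2
  · exact Finset.le_sup (f := id) (Finset.mem_filter.2 ⟨hj, le_refl j⟩)

theorem union_completion_eq_frames (W : Set (Finset ℕ)) (hW : IsBPCategory W) :
    (⋃ w ∈ W, (completion w : Set ℕ)) = {n : ℕ | ∃ w ∈ W, frame w = n} := by
  obtain ⟨hbp, hun, hdu, hpr⟩ := hW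
  ext x
  simp only [Set.mem_iUnion, Set.mem_setOf_eq, Finset.coe_sort_coe, Set.mem_setOf_eq,
    Finset.mem_coe, exists_prop]
  constructor
  · rintro ⟨w, hw, hx⟩
    obtain ⟨j, hjw, i, hij, hiw, hx⟩ := mem_completion.1 hx
    have huW : proj j w ∈ W := hpr w hw j hjw
    have hfu : frame (proj j w) = j := frame_proj hjw
    have hdW : dual (proj j w) ∈ W := hdu _ huW
    have hxd : x ∈ dual (proj j w) := by
      simp only [dual, Finset.mem_image, Finset.mem_filter, Finset.mem_range, hfu]
      exact ⟨i, ⟨hij, fun h => hiw (Finset.mem_filter.1 h).1⟩, hx⟩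
    refine ⟨proj x (dual (proj j w)), hpr _ hdW x hxd, frame_proj hxd⟩
  · rintro ⟨w, hw, rfl⟩
    obtain ⟨hne, h0⟩ := hbp w hw
    have hfw : frame w ∈ w := by
      obtain ⟨a, ha, he⟩ := Finset.exists_mem_eq_sup w hne id
      rw [frame, he]; exact ha
    have hpos : 0 < frame w := Nat.pos_of_ne_zero (fun h => h0 (h ▸ hfw))
    exact ⟨w, hw, mem_completion.2 ⟨frame w, hfw, 0, hpos, h0, rfl⟩⟩
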